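/- arXiv:2502.17737 — 6 statements merged into one kernel-verified Lean document; each statement's English description precedes it below -/
import Mathlib

section
/- Let (C, φ) be a multistate monotone system with component state space 𝔠 = S_1 × ... × S_n (each S_i = {0,...,m_i}), and let P_k = {x_1,...,x_s} be the set of minimal k-level path vectors. Then for all y ∈ 𝔠, the k-level structure function satisfies φ_k(y) = Σ_{x ∈ cl(P_k)} δ_k(x) · I(y ≥ x), where δ_k is the signed domination function of the poset cl(P_k). -/
open Finset

/-- Closure of a finite set of vectors under (componentwise) join. -/
def cl {α : Type*} [SemilatticeSup α] [OrderBot α] (X : Finset α) : Set α :=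
  {x | ∃ T : Finset α, T ⊆ X ∧ T.Nonempty ∧ T.sup id = x}

/-- Closure as a finite set. -/
noncomputable def clF {α : Type*} [SemilatticeSup α] [OrderBot α] [DecidableEq α]
    (X : Finset α) : Finset α :=
  (X.powerset.filter (fun T => T.Nonempty)).image (fun T => T.sup id)

/-- Signed domination function: number of odd formations minus number of even formations. -/
noncomputable def sd {α : Type*} [SemilatticeSup α] [OrderBot α] [DecidableEq α]
    (X : Finset α) (x : α) : ℤ :=
  ∑ T ∈ X.powerset.filter (fun T => T.Nonempty ∧ T.sup id = x), (-1 : ℤ) ^ (T.card + 1)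

/-- Pairwise incomparability of the elements of a finite set. -/
def Incomp {α : Type*} [Preorder α] (X : Finset α) : Prop :=
  ∀ x ∈ X, ∀ y ∈ X, x ≠ y → ¬ x ≤ y ∧ ¬ y ≤ x

/-!
`φ_k(y) = 1` iff `y` dominates some minimal `k`-level path vector, i.e. iff `y` lies in the
union of the up-sets of the elements of `P_k`. By inclusion–exclusion the indicator of that
union is `∑_{∅ ≠ T ⊆ P_k} (-1)^(|T|+1) I(y ≥ ⋁ T)`, and grouping the subsets `T` according to
their join `⋁ T ∈ cl(P_k)` turns the coefficients into the signed domination numbers `δ_k`.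
-/

theorem Finset.sum_nonempty_powerset_neg_one_pow_card_add_one {α : Type*} [DecidableEq α]
    (S : Finset α) :
    ∑ T ∈ S.powerset with T.Nonempty, (-1 : ℤ) ^ (#T + 1) = if S.Nonempty then 1 else 0 := by
  have hne : {T ∈ S.powerset | T.Nonempty} = S.powerset.erase ∅ := by
    simp only [nonempty_iff_ne_empty, filter_ne']
  simp only [hne, pow_succ, mul_neg_one, sum_neg_distrib, sum_erase_eq_sub (empty_mem_powerset S),
    sum_powerset_neg_one_pow_card, card_empty, pow_zero, ← not_nonempty_iff_eq_empty]
  split_ifs <;> norm_num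

section SignedDomination

variable {α : Type*} [SemilatticeSup α] [OrderBot α] [DecidableEq α]

theorem sum_clF_sd_mul (X : Finset α) (f : α → ℤ) :
    ∑ x ∈ clF X, sd X x * f x =
      ∑ T ∈ X.powerset with T.Nonempty, (-1 : ℤ) ^ (#T + 1) * f (T.sup id) := by
  rw [← sum_fiberwise_of_maps_to (t := clF X) (g := fun T => T.sup id)
    (fun T hT => mem_image_of_mem (fun T : Finset α => T.sup id) hT)]
  refine sum_congr rfl fun x _ => ?_
  rw [sd, sum_mul, filter_filter]
  exact sum_congr rfl fun T hT => by rw [(mem_filter.1 hT).2.2]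

theorem sum_clF_sd_mul_ite_le (X : Finset α) (y : α) [DecidablePred (· ≤ y)] :
    ∑ x ∈ clF X, sd X x * (if x ≤ y then 1 else 0) = if ∃ x ∈ X, x ≤ y then 1 else 0 := by
  have hpow : X.powerset.filter (fun T => T.Nonempty ∧ T.sup id ≤ y) =
      (X.filter (· ≤ y)).powerset.filter (fun T => T.Nonempty) := by
    ext T
    simp only [mem_filter, mem_powerset, Finset.sup_le_iff, id, subset_iff]
    grind
  rw [sum_clF_sd_mul]
  simp only [mul_ite, mul_one, mul_zero]
  rw [← sum_filter, filter_filter, hpow, sum_nonempty_powerset_neg_one_pow_card_add_one]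
  exact if_congr filter_nonempty_iff rfl rfl

end SignedDomination

theorem exists_minimal_le_iff_of_isUpperSet {α : Type*} [PartialOrder α] [Finite α]
    {P : α → Prop} (hP : IsUpperSet {x | P x}) (y : α) :
    P y ↔ ∃ x, Minimal P x ∧ x ≤ y := by
  refine ⟨fun hy => ?_, fun ⟨x, hx, hxy⟩ => hP hxy hx.prop⟩
  obtain ⟨x, hxy, hx⟩ := exists_minimal_le_of_wellFoundedLT P y hy
  exact ⟨x, hx, hxy⟩

open scoped Classical in
theorem stmt_2_general {n : ℕ} {m : Fin n → ℕ}
    (φ : (∀ i : Fin n, Fin (m i + 1)) → ℕ) (hφ : Monotone φ) (k : ℕ)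
    (Pk : Finset (∀ i : Fin n, Fin (m i + 1)))
    (hPk : Pk = Finset.univ.filter (fun x => k ≤ φ x ∧ ∀ z, z < x → φ z < k)) :
    ∀ y : ∀ i : Fin n, Fin (m i + 1),
      (if k ≤ φ y then (1 : ℤ) else 0) =
        ∑ x ∈ clF Pk, sd Pk x * (if x ≤ y then 1 else 0) := by
  intro y
  have hmem : ∀ x, x ∈ Pk ↔ Minimal (fun z => k ≤ φ z) x := fun x => by
    simp [hPk, minimal_iff_forall_lt]
  have hφk : k ≤ φ y ↔ ∃ x ∈ Pk, x ≤ y := by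
    simp only [hmem]
    exact exists_minimal_le_iff_of_isUpperSet (P := fun z => k ≤ φ z)
      (fun _ _ hab ha => le_trans ha (hφ hab)) y
  rw [sum_clF_sd_mul_ite_le]
  exact if_congr hφk rfl rfl

open scoped Classical in
theorem stmt_2 {n : ℕ} {m : Fin n → ℕ}
    (φ : (∀ i : Fin n, Fin (m i + 1)) → ℕ) (hφ : Monotone φ) (k : ℕ) (hk : 1 ≤ k)
    (Pk : Finset (∀ i : Fin n, Fin (m i + 1)))
    (hPk : Pk = Finset.univ.filter (fun x => k ≤ φ x ∧ ∀ z, z < x → φ z < k)) :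
    ∀ y : ∀ i : Fin n, Fin (m i + 1),
      (if k ≤ φ y then (1 : ℤ) else 0) =
        ∑ x ∈ clF Pk, sd Pk x * (if x ≤ y then 1 else 0) :=
  stmt_2_general φ hφ k Pk hPk
end

section
/- Let P_k = {x_1,...,x_s} be a finite set of pairwise incomparable vectors in ℕ^n, cl(P_k) its closure under componentwise maximum, and δ_k its signed domination function. Then for every y ∈ cl(P_k), Σ_{x ∈ cl(P_k), x ≤ y} δ_k(x) = 1. -/
open Finset

open scoped Classical in
theorem stmt_3 {n : ℕ} (Pk : Finset (Fin n → ℕ)) (hPk : Incomp Pk) :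
    ∀ y ∈ clF Pk, ∑ x ∈ (clF Pk).filter (fun x => x ≤ y), sd Pk x = 1 := by
  intro y hy
  set S := Pk.filter (fun p => p ≤ y) with hS
  have hSne : S.Nonempty := by
    simp only [clF, mem_image, mem_filter, mem_powerset] at hy
    obtain ⟨T, ⟨hTsub, hTne⟩, hTsup⟩ := hy
    obtain ⟨a, ha⟩ := hTne
    exact ⟨a, mem_filter.2 ⟨hTsub ha, hTsup ▸ le_sup (f := id) ha⟩⟩
  have key : ∑ x ∈ (clF Pk).filter (fun x => x ≤ y), sd Pk x
      = ∑ T ∈ S.powerset.filter (fun T => T.Nonempty), (-1 : ℤ) ^ (T.card + 1) := by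
    have hmaps : ∀ T ∈ S.powerset.filter (fun T => T.Nonempty),
        T.sup id ∈ (clF Pk).filter (fun x => x ≤ y) := by
      intro T hT
      simp only [mem_filter, mem_powerset, hS] at hT
      obtain ⟨hTsub, hTne⟩ := hT
      refine mem_filter.2 ⟨?_, ?_⟩
      · exact mem_image.2 ⟨T, mem_filter.2 ⟨mem_powerset.2
          (fun a ha => (mem_filter.1 (hTsub ha)).1), hTne⟩, rfl⟩
      · exact Finset.sup_le fun a ha => (mem_filter.1 (hTsub ha)).2
    rw [← Finset.sum_fiberwise_of_maps_to hmaps (fun T => (-1 : ℤ) ^ (T.card + 1))]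
    apply Finset.sum_congr rfl
    intro x hx
    simp only [mem_filter] at hx
    unfold sd
    apply Finset.sum_congr _ (fun _ _ => rfl)
    ext T
    simp only [mem_filter, mem_powerset, hS]
    constructor
    · rintro ⟨hT, hne, hsup⟩
      refine ⟨⟨fun a ha => mem_filter.2 ⟨hT ha, ?_⟩, hne⟩, hsup⟩
      exact le_trans (hsup ▸ le_sup (f := id) ha) hx.2
    · rintro ⟨⟨hT, hne⟩, hsup⟩
      exact ⟨fun a ha => (mem_filter.1 (hT ha)).1, hne, hsup⟩
  rw [key]
  have h0 : ∑ T ∈ S.powerset, (-1 : ℤ) ^ T.card = 0 :=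
    Finset.sum_powerset_neg_one_pow_card_of_nonempty hSne
  have hsplit : ∑ T ∈ S.powerset, (-1 : ℤ) ^ T.card
      = (-1 : ℤ) ^ (∅ : Finset (Fin n → ℕ)).card
        + ∑ T ∈ S.powerset.filter (fun T => T.Nonempty), (-1 : ℤ) ^ T.card := by
    rw [← Finset.sum_filter_add_sum_filter_not S.powerset (fun T => T = ∅)]
    congr 1
    · rw [Finset.filter_eq']
      simp
    · congr 1
      ext T
      simp [Finset.nonempty_iff_ne_empty]
  rw [h0] at hsplit
  simp only [card_empty, pow_zero] at hsplit
  have : ∑ T ∈ S.powerset.filter (fun T => T.Nonempty), (-1 : ℤ) ^ T.card = -1 := by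
    linarith
  calc ∑ T ∈ S.powerset.filter (fun T => T.Nonempty), (-1 : ℤ) ^ (T.card + 1)
      = ∑ T ∈ S.powerset.filter (fun T => T.Nonempty), (-1 : ℤ) ^ T.card * (-1) := by
        simp [pow_succ]
    _ = -1 * (-1) := by rw [← Finset.sum_mul, this]
    _ = 1 := by ring
end

section
/- Let (C, φ) be a multistate monotone system and k a system level. If the k-level system (C, φ_k) is not strongly coherent — i.e., some component i has no minimal k-level path vector x with x_i = m_i — then the signed domination d(φ_k) = δ_k(m) equals 0, where m = (m_1,...,m_n) is the maximal component state vector. -/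
open Finset

open scoped Classical in
theorem stmt_4 {n : ℕ} {m : Fin n → ℕ}
    (φ : (∀ i : Fin n, Fin (m i + 1)) → ℕ) (hφ : Monotone φ) (k : ℕ) (hk : 1 ≤ k)
    (Pk : Finset (∀ i : Fin n, Fin (m i + 1)))
    (hPk : Pk = Finset.univ.filter (fun x => k ≤ φ x ∧ ∀ z, z < x → φ z < k))
    (hnc : ∃ i : Fin n, ∀ x ∈ Pk, x i ≠ Fin.last (m i)) :
    sd Pk ⊤ = 0 := by
  obtain ⟨i, hi⟩ := hnc
  unfold sd
  apply Finset.sum_eq_zero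
  intro T hT
  simp only [Finset.mem_filter, Finset.mem_powerset] at hT
  obtain ⟨hTP, hTne, hsup⟩ := hT
  exfalso
  obtain ⟨b, hb, hbeq⟩ := Finset.exists_mem_eq_sup T hTne (fun x => x i)
  apply hi b (hTP hb)
  have h1 : (T.sup id) i = T.sup (fun x => x i) := Finset.sup_apply T id i
  have h2 := congrArg (fun f : ∀ j, Fin (m j + 1) => f i) hsup
  simp only [h1, Pi.top_apply] at h2
  rw [← hbeq, h2]
  rfl
end

section
/- Let (C, φ) be a multistate monotone system and e ∈ C a component with maximal state m_e ≥ 1. Then the signed domination satisfies the pivotal decomposition d(φ_k) = d(φ_k((m_e)_e, ·)) − d(φ_k((m_e − 1)_e, ·)), where φ_k((j)_e, ·) denotes the structure function on the remaining components obtained by fixing component e at state j. -/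
open Finset

/-- The vector x(B): x_i(B) = m_i for i ∈ B and m_i − 1 otherwise. -/
def xBtop {n : ℕ} (m : Fin n → ℕ) (B : Finset (Fin n)) : ∀ i : Fin n, Fin (m i + 1) :=
  fun i => if i ∈ B then Fin.last (m i) else ⟨m i - 1, lt_of_le_of_lt (Nat.sub_le _ _) (Nat.lt_succ_self _)⟩

open scoped Classical in
theorem stmt_10 {n : ℕ} {m : Fin n → ℕ}
    (φ : (∀ i : Fin n, Fin (m i + 1)) → ℕ) (hφ : Monotone φ) (k : ℕ) (hk : 1 ≤ k)
    (e : Fin n) (hme : 1 ≤ m e) :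
    -- d(φ_k)
    (∑ B ∈ (Finset.univ : Finset (Fin n)).powerset,
        (if k ≤ φ (xBtop m B) then (1 : ℤ) else 0) * (-1 : ℤ) ^ (n - B.card))
    -- d(φ_k((m_e)_e, ·)): pivot on e fixed at state m_e
    = (∑ B ∈ ((Finset.univ : Finset (Fin n)).erase e).powerset,
        (if k ≤ φ (xBtop m (insert e B)) then (1 : ℤ) else 0) *
          (-1 : ℤ) ^ (((Finset.univ : Finset (Fin n)).erase e).card - B.card))
    -- minus d(φ_k((m_e − 1)_e, ·)): pivot on e fixed at state m_e − 1
    - (∑ B ∈ ((Finset.univ : Finset (Fin n)).erase e).powerset,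
        (if k ≤ φ (xBtop m B) then (1 : ℤ) else 0) *
          (-1 : ℤ) ^ (((Finset.univ : Finset (Fin n)).erase e).card - B.card)) := by
  have he : e ∉ (Finset.univ : Finset (Fin n)).erase e := notMem_erase _ _
  have huniv : (Finset.univ : Finset (Fin n)) = insert e ((Finset.univ : Finset (Fin n)).erase e) := by
    simp [insert_erase (mem_univ e)]
  have hcard : ((Finset.univ : Finset (Fin n)).erase e).card = n - 1 := by
    simp [card_erase_of_mem (mem_univ e)]
  have hn : 1 ≤ n := Fin.pos e
  conv_lhs => rw [huniv, Finset.sum_powerset_insert he]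
  have h1 : ∀ B ∈ ((Finset.univ : Finset (Fin n)).erase e).powerset,
      (if k ≤ φ (xBtop m B) then (1 : ℤ) else 0) * (-1 : ℤ) ^ (n - B.card)
      = -((if k ≤ φ (xBtop m B) then (1 : ℤ) else 0) *
          (-1 : ℤ) ^ (((Finset.univ : Finset (Fin n)).erase e).card - B.card)) := by
    intro B hB
    have hBc : B.card ≤ n - 1 := hcard ▸ card_le_card (mem_powerset.mp hB)
    have : n - B.card = (n - 1 - B.card) + 1 := by omega
    rw [this, hcard, pow_succ]
    ring
  have h2 : ∀ B ∈ ((Finset.univ : Finset (Fin n)).erase e).powerset,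
      (if k ≤ φ (xBtop m (insert e B)) then (1 : ℤ) else 0) * (-1 : ℤ) ^ (n - (insert e B).card)
      = (if k ≤ φ (xBtop m (insert e B)) then (1 : ℤ) else 0) *
          (-1 : ℤ) ^ (((Finset.univ : Finset (Fin n)).erase e).card - B.card) := by
    intro B hB
    have heB : e ∉ B := fun h => he (mem_powerset.mp hB h)
    have hBc : B.card ≤ n - 1 := hcard ▸ card_le_card (mem_powerset.mp hB)
    rw [card_insert_of_notMem heB, hcard]
    congr 2
    omega
  rw [Finset.sum_congr rfl h1, Finset.sum_congr rfl h2, Finset.sum_neg_distrib]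
  ring
end

section
/- Let (C, φ) be a multistate monotone system with component state space 𝔠 and let δ_k be its k-level signed domination function defined on 𝔠 by Möbius inversion. For y ∈ 𝔠 \ {0}, let A(y) = {i : y_i > 0} and define the binary monotone structure function ψ_k^y on {0,1}^{A(y)} by ψ_k^y(z) = φ_k applied to the vector whose i-th entry is y_i − 1 + z_i for i ∈ A(y) and 0 for i ∉ A(y). Then δ_k(y) = d(ψ_k^y), the signed domination of the associated binary system on A(y). -/
open Finset

/-- The vector whose i-th entry is y_i − 1 + z_i for i ∈ A(y) (z the indicator of B)
and 0 for i ∉ A(y). -/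
def assocVec {n : ℕ} {m : Fin n → ℕ} (y : ∀ i : Fin n, Fin (m i + 1)) (B : Finset (Fin n))
    [DecidableEq (Fin n)] : ∀ i : Fin n, Fin (m i + 1) :=
  fun i =>
    if h : 0 < (y i : ℕ) then
      ⟨(y i : ℕ) - 1 + (if i ∈ B then 1 else 0), by
        have h1 : (if i ∈ B then 1 else 0) ≤ 1 := by split <;> omega
        have h2 := (y i).isLt
        omega⟩
    else ⟨0, Nat.succ_pos _⟩

lemma assocVec_coe {n : ℕ} {m : Fin n → ℕ} (y : ∀ i : Fin n, Fin (m i + 1))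
    (B : Finset (Fin n)) [DecidableEq (Fin n)] (i : Fin n) :
    (assocVec y B i : ℕ) =
      if 0 < (y i : ℕ) then (y i : ℕ) - 1 + (if i ∈ B then 1 else 0) else 0 := by
  simp only [assocVec]
  split <;> simp_all

/-- the vector w with entries bumped up by 1 on S (where possible) -/
def incVec {n : ℕ} {m : Fin n → ℕ} (w : ∀ i : Fin n, Fin (m i + 1)) (S : Finset (Fin n))
    [DecidableEq (Fin n)] : ∀ i : Fin n, Fin (m i + 1) :=
  fun i => if h : i ∈ S ∧ (w i : ℕ) < m i then ⟨(w i : ℕ) + 1, by omega⟩ else w i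

lemma incVec_coe {n : ℕ} {m : Fin n → ℕ} (w : ∀ i : Fin n, Fin (m i + 1))
    (S : Finset (Fin n)) [DecidableEq (Fin n)] (i : Fin n) :
    (incVec w S i : ℕ) =
      if i ∈ S ∧ (w i : ℕ) < m i then (w i : ℕ) + 1 else (w i : ℕ) := by
  simp only [incVec]
  split <;> simp_all

lemma pi_le_iff {n : ℕ} {m : Fin n → ℕ} (x z : ∀ i : Fin n, Fin (m i + 1)) :
    x ≤ z ↔ ∀ i, (x i : ℕ) ≤ (z i : ℕ) := Iff.rfl

open scoped Classical in
lemma claim1 {n : ℕ} {m : Fin n → ℕ}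
    (φ : (∀ i : Fin n, Fin (m i + 1)) → ℕ) (k : ℕ) (y : ∀ i : Fin n, Fin (m i + 1)) :
    (∑ x ∈ Finset.univ.filter (fun x => x ≤ y),
      ∑ B ∈ (Finset.univ.filter (fun i : Fin n => 0 < (x i : ℕ))).powerset,
        (if k ≤ φ (assocVec x B) then (1 : ℤ) else 0) *
          (-1 : ℤ) ^ ((Finset.univ.filter (fun i : Fin n => 0 < (x i : ℕ))).card - B.card))
    = (if k ≤ φ y then (1 : ℤ) else 0) := by
  classical
  set s1 : Finset (Σ _ : (∀ i : Fin n, Fin (m i + 1)), Finset (Fin n)) :=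
    (Finset.univ.filter (fun x => x ≤ y)).sigma
      (fun x => (Finset.univ.filter (fun i : Fin n => 0 < (x i : ℕ))).powerset) with hs1
  set s2 : Finset (Σ _ : (∀ i : Fin n, Fin (m i + 1)), Finset (Fin n)) :=
    (Finset.univ.filter (fun x => x ≤ y)).sigma
      (fun w => (Finset.univ.filter (fun i : Fin n => (w i : ℕ) < (y i : ℕ))).powerset) with hs2
  have hfwd : ∀ p : Σ _ : (∀ i : Fin n, Fin (m i + 1)), Finset (Fin n), p ∈ s1 →
      (⟨assocVec p.1 p.2, Finset.univ.filter (fun i : Fin n => 0 < (p.1 i : ℕ)) \ p.2⟩ :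
        Σ _ : (∀ i : Fin n, Fin (m i + 1)), Finset (Fin n)) ∈ s2 := by
    rintro ⟨x, B⟩ hp
    dsimp only
    rw [hs1, Finset.mem_sigma, Finset.mem_filter, Finset.mem_powerset] at hp
    obtain ⟨⟨-, hxy⟩, hB⟩ := hp
    have hxy' := (pi_le_iff x y).mp hxy
    rw [hs2, Finset.mem_sigma, Finset.mem_filter, Finset.mem_powerset]
    refine ⟨⟨Finset.mem_univ _, ?_⟩, ?_⟩
    · rw [pi_le_iff]
      intro i
      rw [assocVec_coe]
      have := hxy' i
      split_ifs <;> omega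
    · intro i hi
      simp only [Finset.mem_sdiff, Finset.mem_filter, Finset.mem_univ, true_and] at hi
      obtain ⟨hpos, hnB⟩ := hi
      simp only [Finset.mem_filter, Finset.mem_univ, true_and]
      rw [assocVec_coe, if_pos hpos, if_neg hnB]
      have := hxy' i
      omega
  have hbwd : ∀ q : Σ _ : (∀ i : Fin n, Fin (m i + 1)), Finset (Fin n), q ∈ s2 →
      (⟨incVec q.1 q.2, Finset.univ.filter (fun i : Fin n => 0 < (q.1 i : ℕ) ∧ i ∉ q.2)⟩ :
        Σ _ : (∀ i : Fin n, Fin (m i + 1)), Finset (Fin n)) ∈ s1 := by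
    rintro ⟨w, S⟩ hq
    dsimp only
    rw [hs2, Finset.mem_sigma, Finset.mem_filter, Finset.mem_powerset] at hq
    obtain ⟨⟨-, hwy⟩, hS⟩ := hq
    have hwy' := (pi_le_iff w y).mp hwy
    have hSlt : ∀ i ∈ S, (w i : ℕ) < (y i : ℕ) := by
      intro i hi
      have := hS hi
      simp only [Finset.mem_filter] at this
      exact this.2
    rw [hs1, Finset.mem_sigma, Finset.mem_filter, Finset.mem_powerset]
    refine ⟨⟨Finset.mem_univ _, ?_⟩, ?_⟩
    · rw [pi_le_iff]
      intro i
      rw [incVec_coe]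
      have h1 := hwy' i
      by_cases hiS : i ∈ S
      · have h2 := hSlt i hiS
        have h3 := (y i).isLt
        rw [if_pos ⟨hiS, by omega⟩]
        omega
      · rw [if_neg (by tauto)]
        exact h1
    · intro i hi
      simp only [Finset.mem_filter, Finset.mem_univ, true_and] at hi ⊢
      rw [incVec_coe]
      split_ifs <;> omega
  have hli : ∀ p : Σ _ : (∀ i : Fin n, Fin (m i + 1)), Finset (Fin n), p ∈ s1 →
      (⟨incVec (assocVec p.1 p.2) (Finset.univ.filter (fun i : Fin n => 0 < (p.1 i : ℕ)) \ p.2),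
        Finset.univ.filter (fun i : Fin n => 0 < ((assocVec p.1 p.2) i : ℕ) ∧
          i ∉ Finset.univ.filter (fun i : Fin n => 0 < (p.1 i : ℕ)) \ p.2)⟩ :
        Σ _ : (∀ i : Fin n, Fin (m i + 1)), Finset (Fin n)) = p := by
    rintro ⟨x, B⟩ hp
    dsimp only
    rw [hs1, Finset.mem_sigma, Finset.mem_filter, Finset.mem_powerset] at hp
    obtain ⟨⟨-, hxy⟩, hB⟩ := hp
    have hBpos : ∀ i ∈ B, 0 < (x i : ℕ) := by
      intro i hi
      have := hB hi
      simp only [Finset.mem_filter] at this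
      exact this.2
    have h1 : incVec (assocVec x B)
        (Finset.univ.filter (fun i : Fin n => 0 < (x i : ℕ)) \ B) = x := by
      funext i
      refine Fin.ext ?_
      have hm := (x i).isLt
      have hmem : i ∈ Finset.univ.filter (fun i : Fin n => 0 < (x i : ℕ)) \ B
          ↔ (0 < (x i : ℕ) ∧ i ∉ B) := by simp
      rw [incVec_coe, assocVec_coe]
      by_cases hpos : 0 < (x i : ℕ) <;> by_cases hiB : i ∈ B
      · rw [if_pos hpos, if_pos hiB, if_neg (by rw [hmem]; tauto)]
        omega
      · rw [if_pos hpos, if_neg hiB, if_pos ⟨hmem.mpr ⟨hpos, hiB⟩, by omega⟩]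
        omega
      · exact absurd (hBpos i hiB) hpos
      · rw [if_neg hpos, if_neg (by rw [hmem]; tauto)]
        omega
    have h2 : Finset.univ.filter
        (fun i : Fin n => 0 < ((assocVec x B) i : ℕ) ∧
          i ∉ Finset.univ.filter (fun i : Fin n => 0 < (x i : ℕ)) \ B) = B := by
      ext i
      simp only [Finset.mem_filter, Finset.mem_univ, true_and, Finset.mem_sdiff]
      rw [assocVec_coe]
      by_cases hpos : 0 < (x i : ℕ) <;> by_cases hiB : i ∈ B
      · simp [hpos, hiB]
      · simp [hpos, hiB]
      · exact absurd (hBpos i hiB) hpos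
      · simp [hpos, hiB]
    exact Sigma.ext h1 (heq_of_eq (h1 ▸ h2))
  have hri : ∀ q : Σ _ : (∀ i : Fin n, Fin (m i + 1)), Finset (Fin n), q ∈ s2 →
      (⟨assocVec (incVec q.1 q.2) (Finset.univ.filter (fun i : Fin n => 0 < (q.1 i : ℕ) ∧ i ∉ q.2)),
        Finset.univ.filter (fun i : Fin n => 0 < ((incVec q.1 q.2) i : ℕ)) \
          Finset.univ.filter (fun i : Fin n => 0 < (q.1 i : ℕ) ∧ i ∉ q.2)⟩ :
        Σ _ : (∀ i : Fin n, Fin (m i + 1)), Finset (Fin n)) = q := by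
    rintro ⟨w, S⟩ hq
    dsimp only
    rw [hs2, Finset.mem_sigma, Finset.mem_filter, Finset.mem_powerset] at hq
    obtain ⟨⟨-, hwy⟩, hS⟩ := hq
    have hwy' := (pi_le_iff w y).mp hwy
    have hSlt : ∀ i ∈ S, (w i : ℕ) < (y i : ℕ) := by
      intro i hi
      have := hS hi
      simp only [Finset.mem_filter] at this
      exact this.2
    have hinc : ∀ i, ((incVec w S) i : ℕ) = (w i : ℕ) + (if i ∈ S then 1 else 0) := by
      intro i
      rw [incVec_coe]
      by_cases hiS : i ∈ S
      · have h1 := hSlt i hiS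
        have h2 := hwy' i
        have h3 := (y i).isLt
        rw [if_pos ⟨hiS, by omega⟩, if_pos hiS]
      · rw [if_neg (by tauto), if_neg hiS]
        omega
    have hBmem : ∀ i : Fin n,
        i ∈ Finset.univ.filter (fun i : Fin n => 0 < (w i : ℕ) ∧ i ∉ S)
          ↔ (0 < (w i : ℕ) ∧ i ∉ S) := by
      intro i; simp
    have h1 : assocVec (incVec w S)
        (Finset.univ.filter (fun i : Fin n => 0 < (w i : ℕ) ∧ i ∉ S)) = w := by
      funext i
      refine Fin.ext ?_
      rw [assocVec_coe, hinc i]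
      by_cases hiS : i ∈ S <;> by_cases hpos : 0 < (w i : ℕ)
      · rw [if_pos hiS, if_pos (by omega), if_neg (by rw [hBmem]; tauto)]
        omega
      · rw [if_pos hiS, if_pos (by omega), if_neg (by rw [hBmem]; tauto)]
        omega
      · rw [if_neg hiS, if_pos (by omega), if_pos (by rw [hBmem]; tauto)]
        omega
      · rw [if_neg hiS, if_neg (by omega)]
        omega
    have h2 : Finset.univ.filter (fun i : Fin n => 0 < ((incVec w S) i : ℕ))
        \ Finset.univ.filter (fun i : Fin n => 0 < (w i : ℕ) ∧ i ∉ S) = S := by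
      ext i
      simp only [Finset.mem_sdiff, Finset.mem_filter, Finset.mem_univ, true_and]
      rw [hinc i]
      by_cases hiS : i ∈ S <;> simp [hiS] <;> omega
    exact Sigma.ext h1 (heq_of_eq (h1 ▸ h2))
  have hfinal : (∑ q ∈ s2, (if k ≤ φ q.1 then (1 : ℤ) else 0) * (-1 : ℤ) ^ q.2.card)
      = (if k ≤ φ y then (1 : ℤ) else 0) := by
    rw [hs2, Finset.sum_sigma]
    have heval : ∀ w ∈ Finset.univ.filter (fun x : ∀ i : Fin n, Fin (m i + 1) => x ≤ y),
        (∑ S ∈ (Finset.univ.filter (fun i : Fin n => (w i : ℕ) < (y i : ℕ))).powerset,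
          (if k ≤ φ w then (1 : ℤ) else 0) * (-1 : ℤ) ^ S.card)
        = if w = y then (if k ≤ φ y then (1 : ℤ) else 0) else 0 := by
      intro w hw
      have hwy : w ≤ y := (Finset.mem_filter.mp hw).2
      have hwy' := (pi_le_iff w y).mp hwy
      rw [← Finset.mul_sum, Finset.sum_powerset_neg_one_pow_card]
      by_cases h : w = y
      · subst h
        have hemp : Finset.univ.filter (fun i : Fin n => (w i : ℕ) < (w i : ℕ)) = ∅ := by
          ext i; simp
        rw [hemp, if_pos rfl, if_pos rfl, mul_one]
      · have hne : Finset.univ.filter (fun i : Fin n => (w i : ℕ) < (y i : ℕ)) ≠ ∅ := by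
          intro hemp
          apply h
          funext i
          refine Fin.ext ?_
          have h1 := hwy' i
          have h2 : ¬ ((w i : ℕ) < (y i : ℕ)) := by
            intro hlt
            have : i ∈ Finset.univ.filter (fun i : Fin n => (w i : ℕ) < (y i : ℕ)) :=
              Finset.mem_filter.mpr ⟨Finset.mem_univ i, hlt⟩
            rw [hemp] at this
            exact absurd this (Finset.notMem_empty i)
          omega
        rw [if_neg hne, if_neg h, mul_zero]
    rw [Finset.sum_congr rfl heval, Finset.sum_ite_eq' _ y
      (fun _ => if k ≤ φ y then (1 : ℤ) else 0)]
    simp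
  have step1 : (∑ x ∈ Finset.univ.filter (fun x => x ≤ y),
      ∑ B ∈ (Finset.univ.filter (fun i : Fin n => 0 < (x i : ℕ))).powerset,
        (if k ≤ φ (assocVec x B) then (1 : ℤ) else 0) *
          (-1 : ℤ) ^ ((Finset.univ.filter (fun i : Fin n => 0 < (x i : ℕ))).card - B.card))
      = ∑ x ∈ Finset.univ.filter (fun x => x ≤ y),
      ∑ B ∈ (Finset.univ.filter (fun i : Fin n => 0 < (x i : ℕ))).powerset,
        (if k ≤ φ (assocVec x B) then (1 : ℤ) else 0) *
          (-1 : ℤ) ^ ((Finset.univ.filter (fun i : Fin n => 0 < (x i : ℕ)) \ B).card) := by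
    refine Finset.sum_congr rfl fun x _ => Finset.sum_congr rfl fun B hB => ?_
    rw [Finset.card_sdiff_of_subset (Finset.mem_powerset.mp hB)]
  rw [step1]
  refine Eq.trans (Finset.sum_sigma (Finset.univ.filter (fun x => x ≤ y))
    (fun x => (Finset.univ.filter (fun i : Fin n => 0 < (x i : ℕ))).powerset)
    (fun p => (if k ≤ φ (assocVec p.1 p.2) then (1 : ℤ) else 0) *
      (-1 : ℤ) ^ ((Finset.univ.filter (fun i : Fin n => 0 < (p.1 i : ℕ)) \ p.2).card))).symm ?_
  refine Eq.trans (Finset.sum_nbij'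
    (t := s2)
    (g := fun q => (if k ≤ φ q.1 then (1 : ℤ) else 0) * (-1 : ℤ) ^ q.2.card)
    (fun p => ⟨assocVec p.1 p.2, Finset.univ.filter (fun i : Fin n => 0 < (p.1 i : ℕ)) \ p.2⟩)
    (fun q => ⟨incVec q.1 q.2, Finset.univ.filter (fun i : Fin n => 0 < (q.1 i : ℕ) ∧ i ∉ q.2)⟩)
    hfwd hbwd hli hri (fun p _ => rfl)) hfinal

open scoped Classical in
theorem stmt_13 {n : ℕ} {m : Fin n → ℕ}
    (φ : (∀ i : Fin n, Fin (m i + 1)) → ℕ) (hφ : Monotone φ) (k : ℕ) (hk : 1 ≤ k)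
    (δ : (∀ i : Fin n, Fin (m i + 1)) → ℤ)
    (hδ : ∀ y, (if k ≤ φ y then (1 : ℤ) else 0) =
      ∑ x ∈ Finset.univ.filter (fun x => x ≤ y), δ x) :
    ∀ y : ∀ i : Fin n, Fin (m i + 1), y ≠ ⊥ →
      δ y = ∑ B ∈ (Finset.univ.filter (fun i : Fin n => 0 < (y i : ℕ))).powerset,
        (if k ≤ φ (assocVec y B) then (1 : ℤ) else 0) *
          (-1 : ℤ) ^ ((Finset.univ.filter (fun i : Fin n => 0 < (y i : ℕ))).card - B.card) := by
  set D : (∀ i : Fin n, Fin (m i + 1)) → ℤ :=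
    fun y => ∑ B ∈ (Finset.univ.filter (fun i : Fin n => 0 < (y i : ℕ))).powerset,
        (if k ≤ φ (assocVec y B) then (1 : ℤ) else 0) *
          (-1 : ℤ) ^ ((Finset.univ.filter (fun i : Fin n => 0 < (y i : ℕ))).card - B.card)
    with hD
  have key : ∀ N : ℕ, ∀ y : ∀ i : Fin n, Fin (m i + 1), (∑ i, (y i : ℕ)) < N → δ y = D y := by
    intro N
    induction N with
    | zero => intro y hy; omega
    | succ N ih =>
      intro y hy
      have hymem : y ∈ Finset.univ.filter (fun x : ∀ i : Fin n, Fin (m i + 1) => x ≤ y) := by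
        simp
      have h1 : (if k ≤ φ y then (1 : ℤ) else 0)
          = ∑ x ∈ (Finset.univ.filter (fun x => x ≤ y)).erase y, δ x + δ y := by
        rw [Finset.sum_erase_add _ _ hymem]; exact hδ y
      have h2 : (if k ≤ φ y then (1 : ℤ) else 0)
          = ∑ x ∈ (Finset.univ.filter (fun x => x ≤ y)).erase y, D x + D y := by
        rw [Finset.sum_erase_add _ _ hymem]
        exact (claim1 φ k y).symm
      have h3 : ∑ x ∈ (Finset.univ.filter (fun x => x ≤ y)).erase y, δ x
          = ∑ x ∈ (Finset.univ.filter (fun x => x ≤ y)).erase y, D x := by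
        refine Finset.sum_congr rfl fun x hx => ?_
        rw [Finset.mem_erase, Finset.mem_filter] at hx
        obtain ⟨hne, _, hxy⟩ := hx
        refine ih x ?_
        have hlei := (pi_le_iff x y).mp hxy
        have hlt : ∃ i, (x i : ℕ) < (y i : ℕ) := by
          by_contra h
          push_neg at h
          exact hne (funext fun i => Fin.ext (le_antisymm (hlei i) (h i)))
        obtain ⟨j, hj⟩ := hlt
        have : (∑ i, (x i : ℕ)) < ∑ i, (y i : ℕ) :=
          Finset.sum_lt_sum (fun i _ => hlei i) ⟨j, Finset.mem_univ j, hj⟩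
        omega
      linarith [h1, h2, h3]
  intro y _
  exact key ((∑ i, (y i : ℕ)) + 1) y (by omega)
end

section
/- Let φ : {0,1}^n → {0,1} be the structure function of a binary k-out-of-n system, φ(z) = I(Σ_i z_i ≥ k), with 0 < k ≤ n. Then its signed domination equals d(φ) = (−1)^{n−k} · C(n−1, k−1), where C denotes the binomial coefficient. -/
open Finset

lemma aux_sum (d : ℕ) : ∀ n : ℕ, d + 1 ≤ n →
    ∑ j ∈ Finset.Ico (n - d) (n + 1), (-1 : ℤ) ^ (n - j) * n.choose j
      = (-1 : ℤ) ^ d * (n - 1).choose (n - d - 1) := by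
  induction d with
  | zero =>
    intro n hn
    have : Finset.Ico (n - 0) (n + 1) = {n} := by
      rw [Nat.sub_zero]; ext j
      simp only [Finset.mem_Ico, Finset.mem_singleton]; omega
    rw [this, Finset.sum_singleton, Nat.sub_self, Nat.choose_self]
    have : n - 0 - 1 = n - 1 := by omega
    rw [this, Nat.choose_self]
  | succ d ih =>
    intro n hn
    have h2 : n - d ≤ n + 1 := by omega
    rw [← Finset.sum_Ico_consecutive _ (by omega : n - (d+1) ≤ n - d) h2,
        ih n (by omega)]
    have hIco : Finset.Ico (n - (d+1)) (n - d) = {n - (d+1)} := by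
      ext j; simp only [Finset.mem_Ico, Finset.mem_singleton]; omega
    rw [hIco, Finset.sum_singleton]
    have hnd : n - (n - (d + 1)) = d + 1 := by omega
    rw [hnd]
    -- Pascal
    set m := n - (d + 1) with hm
    have hm1 : 1 ≤ m := by omega
    have hp : n.choose m = (n - 1).choose (m - 1) + (n - 1).choose m := by
      have h3 : n = (n - 1) + 1 := by omega
      have h4 : m = (m - 1) + 1 := by omega
      rw [h3, h4, Nat.choose_succ_succ]
      congr 2 <;> omega
    have e1 : n - d - 1 = m := by omega
    have e2 : n - (d + 1) - 1 = m - 1 := by omega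
    rw [e1, e2, hp]
    push_cast
    ring

theorem stmt_14 (n k : ℕ) (hk : 0 < k) (hkn : k ≤ n) :
    -- d(φ) for the binary k-out-of-n structure function φ(1_B) = I(|B| ≥ k)
    (∑ B ∈ (Finset.univ : Finset (Fin n)).powerset,
        (if k ≤ B.card then (1 : ℤ) else 0) * (-1 : ℤ) ^ (n - B.card))
    = (-1 : ℤ) ^ (n - k) * (n - 1).choose (k - 1) := by
  rw [Finset.sum_powerset (Finset.univ : Finset (Fin n))
      (fun B => (if k ≤ B.card then (1 : ℤ) else 0) * (-1 : ℤ) ^ (n - B.card))]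
  have hcard : (Finset.univ : Finset (Fin n)).card = n := Finset.card_univ.trans (Fintype.card_fin n)
  rw [hcard]
  have step : ∀ j ∈ Finset.range (n + 1),
      (∑ B ∈ Finset.powersetCard j (Finset.univ : Finset (Fin n)),
        (if k ≤ B.card then (1 : ℤ) else 0) * (-1 : ℤ) ^ (n - B.card))
      = (n.choose j) * ((if k ≤ j then (1 : ℤ) else 0) * (-1 : ℤ) ^ (n - j)) := by
    intro j _
    rw [Finset.sum_congr rfl (fun B hB => by
      rw [(Finset.mem_powersetCard.1 hB).2]),
      Finset.sum_const, nsmul_eq_mul, Finset.card_powersetCard, hcard]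
  rw [Finset.sum_congr rfl step]
  have hsplit : ∑ j ∈ Finset.range (n + 1),
      (n.choose j : ℤ) * ((if k ≤ j then (1 : ℤ) else 0) * (-1 : ℤ) ^ (n - j))
      = ∑ j ∈ Finset.Ico k (n + 1), (-1 : ℤ) ^ (n - j) * n.choose j := by
    rw [Finset.range_eq_Ico, ← Finset.sum_Ico_consecutive _ (Nat.zero_le k) (by omega : k ≤ n + 1)]
    have h0 : ∑ j ∈ Finset.Ico 0 k,
        (n.choose j : ℤ) * ((if k ≤ j then (1 : ℤ) else 0) * (-1 : ℤ) ^ (n - j)) = 0 := by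
      apply Finset.sum_eq_zero
      intro j hj
      simp only [Finset.mem_Ico] at hj
      rw [if_neg (by omega)]
      ring
    rw [h0, zero_add]
    apply Finset.sum_congr rfl
    intro j hj
    simp only [Finset.mem_Ico] at hj
    rw [if_pos hj.1]
    ring
  rw [hsplit]
  have := aux_sum (n - k) n (by omega)
  have e : n - (n - k) = k := by omega
  rw [e] at this
  rw [this]
end
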